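/- arXiv:1411.1727 — 6 statements merged into one kernel-verified Lean document; each statement's English description precedes it below -/
import Mathlib

section
/- Let Q be a finite quasigroup quandle, n ≥ 2 and 1 ≤ j ≤ n−1. Then ∂_{n+1} ∘ D_n^j + D_{n−1}^j ∘ ∂_n = (−1)^j (f_s^j − f_r^j) as homomorphisms C_n^R(Q) → C_n^R(Q); that is, D^j is a chain homotopy showing f_r^j is chain homotopic to f_s^j. -/
/-- The rack chain group `C_n^R(Q) = ℤQ^n`, the free abelian group on `n`-tuples of
elements of `Q` (modelled as finitely supported `ℤ`-valued functions on `Fin n → Q`). -/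
abbrev CR (Q : Type) (n : ℕ) : Type := (Fin n → Q) →₀ ℤ

/-- The trivial face map `d_i^{(*₀)} : C_{n+1}^R(Q) → C_n^R(Q)`; the index `i` is the paper's
1-based index, `i ∈ {1, …, n+1}`:
`d_i^{(*₀)}(x_1, …, x_{n+1}) = (x_1, …, x_{i-1}, x_{i+1}, …, x_{n+1})`. -/
noncomputable def d0 (Q : Type) (n i : ℕ) : CR Q (n+1) →ₗ[ℤ] CR Q n :=
  Finsupp.lmapDomain ℤ ℤ (fun (x : Fin (n+1) → Q) (k : Fin n) =>
    if (k : ℕ) + 1 < i then x (Fin.castSucc k) else x k.succ)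

/-- The face map `d_i^{(*)} : C_{n+1}^R(Q) → C_n^R(Q)` for a binary operation `op`; the index
`i` is the paper's 1-based index, `i ∈ {1, …, n+1}`:
`d_i^{(*)}(x_1, …, x_{n+1}) = (x_1 * x_i, …, x_{i-1} * x_i, x_{i+1}, …, x_{n+1})`. -/
noncomputable def d1 (Q : Type) (op : Q → Q → Q) (n i : ℕ) : CR Q (n+1) →ₗ[ℤ] CR Q n :=
  Finsupp.lmapDomain ℤ ℤ (fun (x : Fin (n+1) → Q) (k : Fin n) =>
    if h : (k : ℕ) + 1 < i ∧ i ≤ n + 1 then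
      op (x (Fin.castSucc k)) (x ⟨i - 1, by omega⟩)
    else x k.succ)

/-- The rack boundary `∂_{n+1} = Σ_{i=1}^{n+1} (-1)^i (d_i^{(*₀)} - d_i^{(*)})
  : C_{n+1}^R(Q) → C_n^R(Q)`. -/
noncomputable def bdry (Q : Type) (op : Q → Q → Q) (n : ℕ) : CR Q (n+1) →ₗ[ℤ] CR Q n :=
  ∑ i ∈ Finset.Icc 1 (n+1), ((-1 : ℤ)^i) • (d0 Q n i - d1 Q op n i)

/-- The repeater map `f_r^j : C_n^R(Q) → C_n^R(Q)` (paper index `1 ≤ j ≤ n`):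
`f_r^j(x_1, …, x_n) = |Q| ⬝ (x_j, …, x_j, x_{j+1}, …, x_n)` with `x_j` repeated `j` times. -/
noncomputable def frj (Q : Type) [Fintype Q] (n j : ℕ) : CR Q n →ₗ[ℤ] CR Q n :=
  Finsupp.lift (CR Q n) ℤ (Fin n → Q) (fun x =>
    (Fintype.card Q : ℤ) • Finsupp.single
      (fun k : Fin n => if h : (k : ℕ) + 1 ≤ j ∧ j ≤ n then x ⟨j - 1, by omega⟩ else x k) 1)

/-- The symmetrizer map `f_s^j : C_n^R(Q) → C_n^R(Q)` (paper index `0 ≤ j ≤ n`):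
`f_s^j(x_1, …, x_n) = Σ_{y ∈ Q} (y, …, y, x_{j+1}, …, x_n)` with `y` repeated `j` times. -/
noncomputable def fsj (Q : Type) [Fintype Q] (n j : ℕ) : CR Q n →ₗ[ℤ] CR Q n :=
  Finsupp.lift (CR Q n) ℤ (Fin n → Q) (fun x =>
    ∑ y : Q, Finsupp.single (fun k : Fin n => if (k : ℕ) + 1 ≤ j then y else x k) 1)

/-- The chain homotopy `D_n^j : C_n^R(Q) → C_{n+1}^R(Q)` (paper index `1 ≤ j ≤ n`):
`D_n^j(x_1, …, x_n) = Σ_{y ∈ Q} (x_j, …, x_j, y, x_{j+1}, …, x_n)` with `x_j` repeated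
`j` times and `y` in position `j+1`. -/
noncomputable def Dnj (Q : Type) [Fintype Q] (n j : ℕ) : CR Q n →ₗ[ℤ] CR Q (n+1) :=
  if hj : 1 ≤ j ∧ j ≤ n then
    Finsupp.lift (CR Q (n+1)) ℤ (Fin n → Q) (fun x =>
      ∑ y : Q, Finsupp.single (fun k : Fin (n+1) =>
        if h1 : (k : ℕ) + 1 ≤ j then x ⟨j - 1, by omega⟩
        else if h2 : (k : ℕ) = j then y
        else x ⟨(k : ℕ) - 1, by have := k.isLt; omega⟩) 1)
  else 0

/-- The chain homotopy `F_n^j : C_n^R(Q) → C_{n+1}^R(Q)` (paper index `1 ≤ j ≤ n`):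
`F_n^j(x_1, …, x_n) = Σ_{y ∈ Q} (x_j, …, x_j, y, x_j, x_{j+1}, …, x_n)` with `x_j` repeated
`j-1` times, `y` in position `j`, and `x_j` in position `j+1`. -/
noncomputable def Fnj (Q : Type) [Fintype Q] (n j : ℕ) : CR Q n →ₗ[ℤ] CR Q (n+1) :=
  if hj : 1 ≤ j ∧ j ≤ n then
    Finsupp.lift (CR Q (n+1)) ℤ (Fin n → Q) (fun x =>
      ∑ y : Q, Finsupp.single (fun k : Fin (n+1) =>
        if h1 : (k : ℕ) + 1 = j then y
        else if h2 : (k : ℕ) + 1 ≤ j + 1 then x ⟨j - 1, by omega⟩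
        else x ⟨(k : ℕ) - 1, by have := k.isLt; omega⟩) 1)
  else 0

section Aux

private def Tf {Q : Type} (n j : ℕ) (hj : j ≤ n) (x : Fin n → Q) (y : Q) : Fin (n+1) → Q :=
  fun k =>
    if h1 : (k : ℕ) + 1 ≤ j then x ⟨j - 1, by omega⟩
    else if h2 : (k : ℕ) = j then y
    else x ⟨(k : ℕ) - 1, by have := k.isLt; omega⟩

private def δ0f {Q : Type} (n i : ℕ) (x : Fin (n+1) → Q) : Fin n → Q :=
  fun k => if (k : ℕ) + 1 < i then x (Fin.castSucc k) else x k.succ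

private def δ1f {Q : Type} (op : Q → Q → Q) (n i : ℕ) (x : Fin (n+1) → Q) : Fin n → Q :=
  fun k => if h : (k : ℕ) + 1 < i ∧ i ≤ n + 1 then
    op (x (Fin.castSucc k)) (x ⟨i - 1, by omega⟩) else x k.succ

private lemma Dnj_single {Q : Type} [Fintype Q] {n j : ℕ} (hj : 1 ≤ j ∧ j ≤ n) (x : Fin n → Q) :
    Dnj Q n j (Finsupp.single x 1) = ∑ y : Q, Finsupp.single (Tf n j hj.2 x y) 1 := by
  rw [Dnj, dif_pos hj, Finsupp.lift_apply, Finsupp.sum_single_index (by simp), one_smul]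
  rfl

private lemma d0_single {Q : Type} (n i : ℕ) (z : Fin (n+1) → Q) :
    d0 Q n i (Finsupp.single z 1) = Finsupp.single (δ0f n i z) 1 := by
  rw [d0, Finsupp.lmapDomain_apply, Finsupp.mapDomain_single]; rfl

private lemma d1_single {Q : Type} (op : Q → Q → Q) (n i : ℕ) (z : Fin (n+1) → Q) :
    d1 Q op n i (Finsupp.single z 1) = Finsupp.single (δ1f op n i z) 1 := by
  rw [d1, Finsupp.lmapDomain_apply, Finsupp.mapDomain_single]; rfl

private lemma bdry_single {Q : Type} (op : Q → Q → Q) (n : ℕ) (z : Fin (n+1) → Q) :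
    bdry Q op n (Finsupp.single z 1)
      = ∑ i ∈ Finset.Icc 1 (n+1), (-1 : ℤ)^i •
          (Finsupp.single (δ0f n i z) (1 : ℤ) - Finsupp.single (δ1f op n i z) 1) := by
  rw [bdry, LinearMap.sum_apply]
  refine Finset.sum_congr rfl fun i _ => ?_
  rw [LinearMap.smul_apply, LinearMap.sub_apply, d0_single, d1_single]

private lemma fsj_single {Q : Type} [Fintype Q] (n j : ℕ) (x : Fin n → Q) :
    fsj Q n j (Finsupp.single x 1)
      = ∑ y : Q, Finsupp.single (fun k : Fin n => if (k : ℕ) + 1 ≤ j then y else x k) 1 := by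
  rw [fsj, Finsupp.lift_apply, Finsupp.sum_single_index (by simp), one_smul]

private lemma frj_single {Q : Type} [Fintype Q] (n j : ℕ) (x : Fin n → Q) :
    frj Q n j (Finsupp.single x 1)
      = (Fintype.card Q : ℤ) • Finsupp.single
          (fun k : Fin n => if h : (k : ℕ) + 1 ≤ j ∧ j ≤ n then x ⟨j - 1, by omega⟩ else x k)
          1 := by
  rw [frj, Finsupp.lift_apply, Finsupp.sum_single_index (by simp), one_smul]

private lemma xcongr {Q : Type} {n : ℕ} (x : Fin n → Q) {a b : ℕ} {ha : a < n} {hb : b < n}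
    (h : a = b) : x ⟨a, ha⟩ = x ⟨b, hb⟩ := by subst h; rfl

private lemma K1 {Q : Type} (op : Q → Q → Q) (hidem : ∀ a : Q, op a a = a)
    {m j i : ℕ} (hjm : j ≤ m+1) (hi1 : 1 ≤ i) (hij : i ≤ j)
    (x : Fin (m+1) → Q) (y : Q) :
    δ1f op (m+1) i (Tf (m+1) j hjm x y) = δ0f (m+1) i (Tf (m+1) j hjm x y) := by
  funext k
  rcases k with ⟨kv, hkv⟩
  simp only [δ0f, δ1f, Tf, Fin.castSucc_mk, Fin.succ_mk]
  split_ifs <;>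
    first
      | rfl
      | omega
      | exact hidem _
      | exact xcongr x (by omega)
      | (congr 1 <;> first | rfl | exact xcongr x (by omega))

private lemma K2 {Q : Type} (op : Q → Q → Q)
    {m j : ℕ} (hj1 : 1 ≤ j) (hjm : j ≤ m+1) (x : Fin (m+1) → Q) (y : Q) :
    δ0f (m+1) (j+1) (Tf (m+1) j hjm x y)
      = fun k : Fin (m+1) =>
          if h : (k : ℕ) + 1 ≤ j ∧ j ≤ m+1 then x ⟨j - 1, by omega⟩ else x k := by
  funext k
  rcases k with ⟨kv, hkv⟩
  simp only [δ0f, Tf, Fin.castSucc_mk, Fin.succ_mk]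
  split_ifs <;>
    first
      | rfl
      | omega
      | exact xcongr x (by omega)
      | (congr 1 <;> first | rfl | exact xcongr x (by omega))

private lemma K3 {Q : Type} (op : Q → Q → Q)
    {m j : ℕ} (hj1 : 1 ≤ j) (hjm : j ≤ m+1) (x : Fin (m+1) → Q) (y : Q) :
    δ1f op (m+1) (j+1) (Tf (m+1) j hjm x y)
      = fun k : Fin (m+1) =>
          if (k : ℕ) + 1 ≤ j then op (x ⟨j - 1, by omega⟩) y else x k := by
  funext k
  rcases k with ⟨kv, hkv⟩
  simp only [δ1f, Tf, Fin.castSucc_mk, Fin.succ_mk]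
  split_ifs <;>
    first
      | rfl
      | omega
      | exact xcongr x (by omega)
      | (congr 1 <;> first | rfl | exact xcongr x (by omega))

private lemma K4 {Q : Type} (op : Q → Q → Q)
    {m j i : ℕ} (hj1 : 1 ≤ j) (hjm : j ≤ m) (hij : j + 1 ≤ i) (him : i ≤ m+1)
    (x : Fin (m+1) → Q) (y : Q) :
    δ0f (m+1) (i+1) (Tf (m+1) j (by omega) x y) = Tf m j hjm (δ0f m i x) y := by
  funext k
  rcases k with ⟨kv, hkv⟩
  simp only [δ0f, Tf, Fin.castSucc_mk, Fin.succ_mk]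
  split_ifs <;>
    first
      | rfl
      | omega
      | exact xcongr x (by omega)
      | (congr 1 <;> first | rfl | exact xcongr x (by omega))

private lemma K5 {Q : Type} (op : Q → Q → Q)
    {m j i : ℕ} (hj1 : 1 ≤ j) (hjm : j ≤ m) (hij : j + 1 ≤ i) (him : i ≤ m+1)
    (x : Fin (m+1) → Q) (y : Q) :
    δ1f op (m+1) (i+1) (Tf (m+1) j (by omega) x y)
      = Tf m j hjm (δ1f op m i x) (op y (x ⟨i - 1, by omega⟩)) := by
  funext k
  rcases k with ⟨kv, hkv⟩
  simp only [δ0f, δ1f, Tf, Fin.castSucc_mk, Fin.succ_mk]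
  split_ifs <;>
    first
      | rfl
      | omega
      | exact xcongr x (by omega)
      | (congr 1 <;> first | rfl | exact xcongr x (by omega))

private lemma K6 {Q : Type} (op : Q → Q → Q)
    {m j i : ℕ} (hjm : j ≤ m) (hi1 : 1 ≤ i) (hij : i ≤ j)
    (x : Fin (m+1) → Q) (y : Q) :
    Tf m j hjm (δ0f m i x) y = Tf m j hjm (δ1f op m i x) y := by
  funext k
  rcases k with ⟨kv, hkv⟩
  simp only [δ0f, δ1f, Tf, Fin.castSucc_mk, Fin.succ_mk]
  split_ifs <;>
    first
      | rfl
      | omega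
      | exact xcongr x (by omega)
      | (congr 1 <;> first | rfl | exact xcongr x (by omega))

private lemma combine {M : Type} [AddCommGroup M] (A B : ℕ → M) (R : M)
    (m j : ℕ) (hj1 : 1 ≤ j) (hj2 : j ≤ m)
    (hA0 : ∀ i, 1 ≤ i → i ≤ j → A i = 0)
    (hB0 : ∀ i, 1 ≤ i → i ≤ j → B i = 0)
    (hAj : A (j+1) = R)
    (hAB : ∀ i, j+1 ≤ i → i ≤ m+1 → A (i+1) + B i = 0) :
    ∑ i ∈ Finset.Icc 1 (m+2), A i + ∑ i ∈ Finset.Icc 1 (m+1), B i = R := by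
  have h1 : Finset.Icc 1 (m+2) = Finset.Ioc 0 (m+2) := by ext a; simp; omega
  have h2 : Finset.Icc 1 (m+1) = Finset.Ioc 0 (m+1) := by ext a; simp; omega
  rw [h1, h2,
    ← Finset.sum_Ioc_consecutive A (Nat.zero_le j) (by omega : j ≤ m+2),
    ← Finset.sum_Ioc_consecutive A (by omega : j ≤ j+1) (by omega : j+1 ≤ m+2),
    ← Finset.sum_Ioc_consecutive B (Nat.zero_le j) (by omega : j ≤ m+1)]
  have zA : ∑ i ∈ Finset.Ioc 0 j, A i = 0 :=
    Finset.sum_eq_zero (fun i hi => by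
      simp only [Finset.mem_Ioc] at hi; exact hA0 i (by omega) hi.2)
  have zB : ∑ i ∈ Finset.Ioc 0 j, B i = 0 :=
    Finset.sum_eq_zero (fun i hi => by
      simp only [Finset.mem_Ioc] at hi; exact hB0 i (by omega) hi.2)
  have zS : ∑ i ∈ Finset.Ioc j (j+1), A i = A (j+1) := by
    rw [Nat.Ioc_succ_singleton, Finset.sum_singleton]
  have h3 : ∑ i ∈ Finset.Ioc (j+1) (m+2), A i = ∑ i ∈ Finset.Ioc j (m+1), A (i+1) := by
    rw [← Finset.map_add_right_Ioc j (m+1) 1, Finset.sum_map]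
    simp [addRightEmbedding_apply]
  have zAB : ∑ i ∈ Finset.Ioc j (m+1), (A (i+1) + B i) = 0 :=
    Finset.sum_eq_zero (fun i hi => by
      simp only [Finset.mem_Ioc] at hi; exact hAB i (by omega) hi.2)
  rw [zA, zB, zS, h3, zero_add, zero_add, add_assoc, ← Finset.sum_add_distrib, zAB,
    add_zero, hAj]

end Aux

/-- Let `Q` be a finite quasigroup quandle, `n ≥ 2` and `1 ≤ j ≤ n-1`
(here `n = m+1`, so `1 ≤ j ≤ m`). Then
`∂_{n+1} ∘ D_n^j + D_{n-1}^j ∘ ∂_n = (-1)^j (f_s^j - f_r^j)` as homomorphisms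
`C_n^R(Q) → C_n^R(Q)`. -/
theorem D_chain_homotopy
    (Q : Type) [Fintype Q] (op : Q → Q → Q)
    (hsd : ∀ a b c : Q, op (op a b) c = op (op a c) (op b c))
    (hinv : ∀ b : Q, Function.Bijective (fun a => op a b))
    (hidem : ∀ a : Q, op a a = a)
    (hlatin : ∀ a b : Q, ∃! x : Q, op a x = b)
    (m j : ℕ) (hj1 : 1 ≤ j) (hj2 : j ≤ m) :
    bdry Q op (m+1) ∘ₗ Dnj Q (m+1) j + Dnj Q m j ∘ₗ bdry Q op m
      = ((-1 : ℤ)^j) • (fsj Q (m+1) j - frj Q (m+1) j) := by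
  have hjm : 1 ≤ j ∧ j ≤ m := ⟨hj1, hj2⟩
  have hjm1 : 1 ≤ j ∧ j ≤ m+1 := ⟨hj1, by omega⟩
  have hbij2 : ∀ a : Q, Function.Bijective (fun y => op a y) := by
    intro a
    constructor
    · intro y z h
      obtain ⟨w, _, hu⟩ := hlatin a (op a z)
      rw [hu y h, hu z rfl]
    · intro b
      obtain ⟨w, hw, _⟩ := hlatin a b
      exact ⟨w, hw⟩
  apply Finsupp.lhom_ext
  intro x b
  have key : (bdry Q op (m+1) ∘ₗ Dnj Q (m+1) j + Dnj Q m j ∘ₗ bdry Q op m) (Finsupp.single x 1)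
      = (((-1:ℤ)^j) • (fsj Q (m+1) j - frj Q (m+1) j)) (Finsupp.single x 1) := by
    have e1 : bdry Q op (m+1) (Dnj Q (m+1) j (Finsupp.single x 1))
        = ∑ i ∈ Finset.Icc 1 (m+2), (-1:ℤ)^i •
            ∑ y : Q, (Finsupp.single (δ0f (m+1) i (Tf (m+1) j hjm1.2 x y)) (1:ℤ)
              - Finsupp.single (δ1f op (m+1) i (Tf (m+1) j hjm1.2 x y)) 1) := by
      rw [Dnj_single hjm1, map_sum]
      simp_rw [bdry_single]
      rw [Finset.sum_comm]
      exact Finset.sum_congr rfl fun i _ => (Finset.smul_sum).symm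
    have e2 : Dnj Q m j (bdry Q op m (Finsupp.single x 1))
        = ∑ i ∈ Finset.Icc 1 (m+1), (-1:ℤ)^i •
            ((∑ y : Q, Finsupp.single (Tf m j hjm.2 (δ0f m i x) y) (1:ℤ))
              - ∑ y : Q, Finsupp.single (Tf m j hjm.2 (δ1f op m i x) y) 1) := by
      rw [bdry_single, map_sum]
      refine Finset.sum_congr rfl fun i _ => ?_
      rw [map_smul, map_sub, Dnj_single hjm, Dnj_single hjm]
    have e3 : (((-1:ℤ)^j) • (fsj Q (m+1) j - frj Q (m+1) j)) (Finsupp.single x 1)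
        = (-1:ℤ)^j •
            ((∑ y : Q, Finsupp.single
                (fun k : Fin (m+1) => if (k:ℕ)+1 ≤ j then y else x k) (1:ℤ))
              - (Fintype.card Q : ℤ) • Finsupp.single
                  (fun k : Fin (m+1) =>
                    if h : (k:ℕ)+1 ≤ j ∧ j ≤ m+1 then x ⟨j-1, by omega⟩ else x k) 1) := by
      rw [LinearMap.smul_apply, LinearMap.sub_apply, fsj_single, frj_single]
    rw [LinearMap.add_apply, LinearMap.comp_apply, LinearMap.comp_apply, e1, e2, e3]
    refine combine _ _ _ m j hj1 hj2 ?_ ?_ ?_ ?_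
    · intro i h1 h2
      rw [Finset.sum_eq_zero (fun y _ => by
        rw [K1 op hidem hjm1.2 h1 h2 x y, sub_self]), smul_zero]
    · intro i h1 h2
      have hK : ∀ y : Q, Tf m j hjm.2 (δ0f m i x) y = Tf m j hjm.2 (δ1f op m i x) y :=
        fun y => K6 op hjm.2 h1 h2 x y
      simp_rw [hK]
      rw [sub_self, smul_zero]
    · simp_rw [K2 op hj1 hjm1.2 x, K3 op hj1 hjm1.2 x]
      rw [Finset.sum_sub_distrib, Finset.sum_const, Finset.card_univ]
      have hre : ∑ y : Q, Finsupp.single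
            (fun k : Fin (m+1) =>
              if (k:ℕ)+1 ≤ j then op (x ⟨j-1, by omega⟩) y else x k) (1:ℤ)
          = ∑ y : Q, Finsupp.single
              (fun k : Fin (m+1) => if (k:ℕ)+1 ≤ j then y else x k) 1 :=
        Fintype.sum_bijective _ (hbij2 (x ⟨j-1, by omega⟩)) _ _ (fun y => rfl)
      rw [hre, ← Nat.cast_smul_eq_nsmul ℤ, pow_succ, mul_neg_one, neg_smul, ← smul_neg,
        neg_sub]
    · intro i h1 h2
      have e4 : ∀ y : Q, δ0f (m+1) (i+1) (Tf (m+1) j hjm1.2 x y)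
          = Tf m j hjm.2 (δ0f m i x) y :=
        fun y => K4 op hj1 hjm.2 h1 h2 x y
      have e5 : ∀ y : Q, δ1f op (m+1) (i+1) (Tf (m+1) j hjm1.2 x y)
          = Tf m j hjm.2 (δ1f op m i x) (op y (x ⟨i-1, by omega⟩)) :=
        fun y => K5 op hj1 hjm.2 h1 h2 x y
      simp_rw [e4, e5]
      rw [Finset.sum_sub_distrib]
      have hre2 : ∑ y : Q, Finsupp.single
            (Tf m j hjm.2 (δ1f op m i x) (op y (x ⟨i-1, by omega⟩))) (1:ℤ)
          = ∑ y : Q, Finsupp.single (Tf m j hjm.2 (δ1f op m i x) y) 1 :=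
        Fintype.sum_bijective _ (hinv (x ⟨i-1, by omega⟩)) _ _ (fun y => rfl)
      rw [hre2, pow_succ, mul_neg_one, neg_smul, neg_add_cancel]
  have hsx : (Finsupp.single x b) = b • Finsupp.single x (1:ℤ) := by
    rw [Finsupp.smul_single', mul_one]
  rw [hsx, map_smul, map_smul, key]
end

section
/- Let Q be a finite quasigroup quandle and 1 ≤ j ≤ n. Then d_{j+1}^{(*)} ∘ D_n^j = f_s^j and d_{j+1}^{(*0)} ∘ D_n^j = f_r^j as homomorphisms C_n^R(Q) → C_n^R(Q) (here d_{j+1} denotes the (j+1)-st face map on C_{n+1}^R(Q)). -/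
/-- Let `Q` be a finite quasigroup quandle and `1 ≤ j ≤ n`. Then
`d_{j+1}^{(*)} ∘ D_n^j = f_s^j` and `d_{j+1}^{(*₀)} ∘ D_n^j = f_r^j` as homomorphisms
`C_n^R(Q) → C_n^R(Q)`. -/
theorem face_D_eq_fs_fr
    (Q : Type) [Fintype Q] (op : Q → Q → Q)
    (hsd : ∀ a b c : Q, op (op a b) c = op (op a c) (op b c))
    (hinv : ∀ b : Q, Function.Bijective (fun a => op a b))
    (hidem : ∀ a : Q, op a a = a)
    (hlatin : ∀ a b : Q, ∃! x : Q, op a x = b)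
    (n j : ℕ) (hj1 : 1 ≤ j) (hj2 : j ≤ n) :
    d1 Q op n (j+1) ∘ₗ Dnj Q n j = fsj Q n j ∧
    d0 Q n (j+1) ∘ₗ Dnj Q n j = frj Q n j := by
  have hop : ∀ a : Q, Function.Bijective (op a) := by
    intro a
    constructor
    · intro u v huv
      obtain ⟨z, hz, hz'⟩ := hlatin a (op a u)
      rw [hz' u rfl, hz' v huv.symm]
    · intro b; obtain ⟨z, hz, _⟩ := hlatin a b; exact ⟨z, hz⟩
  have hjj : 1 ≤ j ∧ j ≤ n := ⟨hj1, hj2⟩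
  rw [Dnj, dif_pos hjj]
  constructor
  · apply Finsupp.lhom_ext
    intro x b
    simp only [LinearMap.comp_apply, Finsupp.lift_apply, Finsupp.sum_single_index,
      zero_smul, one_smul, map_smul, map_sum, fsj]
    congr 1
    simp only [d1, Finsupp.lmapDomain_apply, Finsupp.mapDomain_single]
    refine Fintype.sum_bijective (op (x ⟨j - 1, by omega⟩)) (hop _) _ _ fun y => ?_
    congr 1
    funext k
    simp only [Fin.coe_castSucc, Fin.val_succ, Nat.add_sub_cancel]
    by_cases hk : (k : ℕ) + 1 ≤ j
    · rw [dif_pos (show (k : ℕ) + 1 < j + 1 ∧ j + 1 ≤ n + 1 by omega)]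
      rw [dif_pos hk, dif_neg (show ¬ j + 1 ≤ j by omega), dif_pos trivial, if_pos hk]
    · rw [dif_neg (show ¬ ((k : ℕ) + 1 < j + 1 ∧ j + 1 ≤ n + 1) by omega)]
      rw [dif_neg (show ¬ (k : ℕ) + 1 + 1 ≤ j by omega),
        dif_neg (show ¬ (k : ℕ) + 1 = j by omega), if_neg hk]
  · apply Finsupp.lhom_ext
    intro x b
    simp only [LinearMap.comp_apply, Finsupp.lift_apply, Finsupp.sum_single_index,
      zero_smul, one_smul, map_smul, map_sum, frj]
    congr 1
    simp only [d0, Finsupp.lmapDomain_apply, Finsupp.mapDomain_single]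
    have key : ∀ y : Q, (Finsupp.single (fun k : Fin n =>
        if (k : ℕ) + 1 < j + 1 then
          (fun k : Fin (n+1) =>
            if h1 : (k : ℕ) + 1 ≤ j then x ⟨j - 1, by omega⟩
            else if h2 : (k : ℕ) = j then y
            else x ⟨(k : ℕ) - 1, by have := k.isLt; omega⟩) (Fin.castSucc k)
        else (fun k : Fin (n+1) =>
            if h1 : (k : ℕ) + 1 ≤ j then x ⟨j - 1, by omega⟩
            else if h2 : (k : ℕ) = j then y
            else x ⟨(k : ℕ) - 1, by have := k.isLt; omega⟩) k.succ) (1 : ℤ)) =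
        Finsupp.single (fun k : Fin n =>
          if h : (k : ℕ) + 1 ≤ j ∧ j ≤ n then x ⟨j - 1, by omega⟩ else x k) 1 := by
      intro y
      congr 1
      funext k
      simp only [Fin.coe_castSucc, Fin.val_succ]
      by_cases hk : (k : ℕ) + 1 ≤ j
      · rw [if_pos (show (k : ℕ) + 1 < j + 1 by omega), dif_pos hk, dif_pos ⟨hk, hj2⟩]
      · rw [if_neg (show ¬ (k : ℕ) + 1 < j + 1 by omega),
          dif_neg (show ¬ (k : ℕ) + 1 + 1 ≤ j by omega),
          dif_neg (show ¬ (k : ℕ) + 1 = j by omega), dif_neg (fun h => hk h.1)]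
        exact congrArg x (Fin.ext (by simp))
    simp only [key, Finset.sum_const, Finset.card_univ]
    exact (Nat.cast_smul_eq_nsmul ℤ _ _).symm
end

section
/- Let Q be a finite quasigroup quandle and 1 ≤ j ≤ n. Then d_j^{(*)} ∘ F_n^j = f_s^{j−1} and d_j^{(*0)} ∘ F_n^j = f_r^j as homomorphisms C_n^R(Q) → C_n^R(Q) (here d_j denotes the j-th face map on C_{n+1}^R(Q)). -/
/-- Let `Q` be a finite quasigroup quandle and `1 ≤ j ≤ n`. Then
`d_j^{(*)} ∘ F_n^j = f_s^{j-1}` and `d_j^{(*₀)} ∘ F_n^j = f_r^j` as homomorphisms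
`C_n^R(Q) → C_n^R(Q)`. -/
theorem face_F_eq_fs_fr
    (Q : Type) [Fintype Q] (op : Q → Q → Q)
    (hsd : ∀ a b c : Q, op (op a b) c = op (op a c) (op b c))
    (hinv : ∀ b : Q, Function.Bijective (fun a => op a b))
    (hidem : ∀ a : Q, op a a = a)
    (hlatin : ∀ a b : Q, ∃! x : Q, op a x = b)
    (n j : ℕ) (hj1 : 1 ≤ j) (hj2 : j ≤ n) :
    d1 Q op n j ∘ₗ Fnj Q n j = fsj Q n (j-1) ∧
    d0 Q n j ∘ₗ Fnj Q n j = frj Q n j := by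
  have hbij : ∀ a : Q, Function.Bijective (op a) := by
    intro a
    constructor
    · intro u v huv
      obtain ⟨z, hz, hu⟩ := hlatin a (op a u)
      exact (hu u rfl).trans (hu v huv.symm).symm
    · intro b; obtain ⟨z, hz, _⟩ := hlatin a b; exact ⟨z, hz⟩
  constructor
  · refine Finsupp.lhom_ext fun x b => ?_
    rw [LinearMap.comp_apply, Fnj, dif_pos ⟨hj1, hj2⟩]
    rw [Finsupp.lift_apply, Finsupp.sum_single_index (by simp)]
    rw [map_smul, map_sum]
    rw [fsj, Finsupp.lift_apply, Finsupp.sum_single_index (by simp)]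
    simp only [d1, Finsupp.lmapDomain_apply, Finsupp.mapDomain_single]
    refine congrArg _ ?_
    refine Fintype.sum_bijective (fun y => op (x ⟨j-1, by omega⟩) y) (hbij _) _ _ fun y => ?_
    congr 1
    funext k
    simp only [Fin.coe_castSucc, Fin.val_succ]
    simp only [show ∀ m:ℕ, (m + 1 < j ∧ j ≤ n + 1) ↔ m + 1 < j from fun m => and_iff_left (by omega)]
    split_ifs with h1 h2 h3 h4 h5 <;>
      first
      | rfl
      | (exact congrArg x (Fin.ext (by simp only [Fin.val_mk]; omega)))
      | (exfalso; omega)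
  · refine Finsupp.lhom_ext fun x b => ?_
    rw [LinearMap.comp_apply, Fnj, dif_pos ⟨hj1, hj2⟩]
    rw [Finsupp.lift_apply, Finsupp.sum_single_index (by simp)]
    rw [map_smul, map_sum]
    rw [frj, Finsupp.lift_apply, Finsupp.sum_single_index (by simp)]
    simp only [d0, Finsupp.lmapDomain_apply, Finsupp.mapDomain_single]
    refine congrArg _ ?_
    rw [Finset.sum_congr rfl (g := fun _ => Finsupp.single
      (fun k : Fin n => if h : (k : ℕ) + 1 ≤ j ∧ j ≤ n then x ⟨j - 1, by omega⟩ else x k) (1:ℤ))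
      (fun y _ => ?_), Finset.sum_const, Finset.card_univ, natCast_zsmul]
    congr 1
    funext k
    simp only [Fin.coe_castSucc, Fin.val_succ]
    simp only [show ∀ m:ℕ, (m + 1 ≤ j ∧ j ≤ n) ↔ m + 1 ≤ j from fun m => and_iff_left hj2]
    split_ifs with h1 h2 h3 h4 h5 <;>
      first
      | rfl
      | (exact congrArg x (Fin.ext (by simp only [Fin.val_mk]; omega)))
      | (exfalso; omega)
end

section
/- Let Q be a finite quandle. Then: (a) for 1 ≤ i ≤ j ≤ n, d_i^{(*)} ∘ D_n^j = d_i^{(*0)} ∘ D_n^j; (b) for 1 ≤ i ≤ j−1 ≤ n−1, d_i^{(*)} ∘ F_n^j = d_i^{(*0)} ∘ F_n^j; and (c) for 1 ≤ j ≤ n, d_{j+1}^{(*)} ∘ F_n^j = d_{j+1}^{(*0)} ∘ F_n^j. In particular (d_i^{(*)} − d_i^{(*0)}) ∘ D_n^j = 0 for i ≤ j and (d_i^{(*)} − d_i^{(*0)}) ∘ F_n^j = 0 for i ≤ j−1 or i = j+1. -/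
/-- **Statement 7.** Let `Q` be a finite quandle. Then:
(a) for `1 ≤ i ≤ j ≤ n`, `d_i^{(*)} ∘ D_n^j = d_i^{(*₀)} ∘ D_n^j`;
(b) for `1 ≤ i ≤ j-1 ≤ n-1`, `d_i^{(*)} ∘ F_n^j = d_i^{(*₀)} ∘ F_n^j`;
(c) for `1 ≤ j ≤ n`, `d_{j+1}^{(*)} ∘ F_n^j = d_{j+1}^{(*₀)} ∘ F_n^j`.
In particular `(d_i^{(*)} - d_i^{(*₀)}) ∘ D_n^j = 0` for `i ≤ j` and
`(d_i^{(*)} - d_i^{(*₀)}) ∘ F_n^j = 0` for `i ≤ j-1` or `i = j+1`. -/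
theorem faces_agree_on_DF
    (Q : Type) [Fintype Q] (op : Q → Q → Q)
    (hsd : ∀ a b c : Q, op (op a b) c = op (op a c) (op b c))
    (hinv : ∀ b : Q, Function.Bijective (fun a => op a b))
    (hidem : ∀ a : Q, op a a = a)
    (n : ℕ) :
    (∀ i j : ℕ, 1 ≤ i → i ≤ j → j ≤ n →
      d1 Q op n i ∘ₗ Dnj Q n j = d0 Q n i ∘ₗ Dnj Q n j) ∧
    (∀ i j : ℕ, 1 ≤ i → i ≤ j - 1 → j ≤ n →
      d1 Q op n i ∘ₗ Fnj Q n j = d0 Q n i ∘ₗ Fnj Q n j) ∧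
    (∀ j : ℕ, 1 ≤ j → j ≤ n →
      d1 Q op n (j+1) ∘ₗ Fnj Q n j = d0 Q n (j+1) ∘ₗ Fnj Q n j) := by
  refine ⟨?_, ?_, ?_⟩
  · intro i j hi hij hjn
    apply Finsupp.lhom_ext
    intro x c
    rw [LinearMap.comp_apply, LinearMap.comp_apply, Dnj, dif_pos ⟨hi.trans hij, hjn⟩,
      Finsupp.lift_apply, Finsupp.sum_single_index (by simp), map_smul, map_smul,
      map_sum, map_sum]
    congr 1
    refine Finset.sum_congr rfl fun y _ => ?_
    rw [d1, d0, Finsupp.lmapDomain_apply, Finsupp.lmapDomain_apply,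
      Finsupp.mapDomain_single, Finsupp.mapDomain_single]
    congr 1
    funext k
    have hk := k.isLt
    simp only [Fin.coe_castSucc, Fin.val_succ]
    split_ifs <;> first | rfl | exact hidem _ | omega
  · intro i j hi hij hjn
    apply Finsupp.lhom_ext
    intro x c
    have hj : 1 ≤ j ∧ j ≤ n := ⟨by omega, hjn⟩
    rw [LinearMap.comp_apply, LinearMap.comp_apply, Fnj, dif_pos hj,
      Finsupp.lift_apply, Finsupp.sum_single_index (by simp), map_smul, map_smul,
      map_sum, map_sum]
    congr 1
    refine Finset.sum_congr rfl fun y _ => ?_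
    rw [d1, d0, Finsupp.lmapDomain_apply, Finsupp.lmapDomain_apply,
      Finsupp.mapDomain_single, Finsupp.mapDomain_single]
    congr 1
    funext k
    have hk := k.isLt
    simp only [Fin.coe_castSucc, Fin.val_succ]
    split_ifs <;> first | rfl | exact hidem _ | omega
  · intro j hj hjn
    apply Finsupp.lhom_ext
    intro x c
    rw [LinearMap.comp_apply, LinearMap.comp_apply, Fnj, dif_pos ⟨hj, hjn⟩,
      Finsupp.lift_apply, Finsupp.sum_single_index (by simp), map_smul, map_smul,
      map_sum, map_sum]
    congr 1
    set e := Equiv.ofBijective _ (hinv (x ⟨j - 1, by omega⟩)) with he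
    rw [← Equiv.sum_comp e (fun y => (d0 Q n (j+1)) (Finsupp.single (fun k : Fin (n+1) =>
        if h1 : (k : ℕ) + 1 = j then y
        else if h2 : (k : ℕ) + 1 ≤ j + 1 then x ⟨j - 1, by omega⟩
        else x ⟨(k : ℕ) - 1, by have := k.isLt; omega⟩) 1))]
    refine Finset.sum_congr rfl fun y _ => ?_
    rw [d1, d0, Finsupp.lmapDomain_apply, Finsupp.lmapDomain_apply,
      Finsupp.mapDomain_single, Finsupp.mapDomain_single]
    congr 1
    funext k
    have hk := k.isLt
    simp only [Fin.coe_castSucc, Fin.val_succ, he, Equiv.ofBijective_apply]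
    split_ifs <;> first | rfl | exact hidem _ | omega
end

section
/- Let Q be a finite quasigroup quandle. Then for 1 ≤ i ≤ n−1, d_{i+1}^{(*)} ∘ D_n^i = d_{i+1}^{(*)} ∘ F_n^{i+1}, and for 1 ≤ i ≤ n, d_{i+1}^{(*0)} ∘ D_n^i = d_i^{(*0)} ∘ F_n^i, as homomorphisms C_n^R(Q) → C_n^R(Q). -/
/-- **Statement 8.** Let `Q` be a finite quasigroup quandle. Then for `1 ≤ i ≤ n-1`,
`d_{i+1}^{(*)} ∘ D_n^i = d_{i+1}^{(*)} ∘ F_n^{i+1}`, and for `1 ≤ i ≤ n`,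
`d_{i+1}^{(*₀)} ∘ D_n^i = d_i^{(*₀)} ∘ F_n^i`, as homomorphisms `C_n^R(Q) → C_n^R(Q)`. -/
theorem face_D_eq_face_F
    (Q : Type) [Fintype Q] (op : Q → Q → Q)
    (hsd : ∀ a b c : Q, op (op a b) c = op (op a c) (op b c))
    (hinv : ∀ b : Q, Function.Bijective (fun a => op a b))
    (hidem : ∀ a : Q, op a a = a)
    (hlatin : ∀ a b : Q, ∃! x : Q, op a x = b)
    (n : ℕ) :
    (∀ i : ℕ, 1 ≤ i → i + 1 ≤ n →
      d1 Q op n (i+1) ∘ₗ Dnj Q n i = d1 Q op n (i+1) ∘ₗ Fnj Q n (i+1)) ∧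
    (∀ i : ℕ, 1 ≤ i → i ≤ n →
      d0 Q n (i+1) ∘ₗ Dnj Q n i = d0 Q n i ∘ₗ Fnj Q n i) := by
  have hb : ∀ a : Q, Function.Bijective (fun y => op a y) := by
    intro a
    constructor
    · intro y1 y2 h
      obtain ⟨x, hx, hu⟩ := hlatin a (op a y2)
      exact (hu y1 h).trans (hu y2 rfl).symm
    · intro b
      obtain ⟨x, hx, _⟩ := hlatin a b
      exact ⟨x, hx⟩
  constructor
  · intro i hi1 hin
    apply Finsupp.lhom_ext' ; intro x
    apply LinearMap.ext_ring
    simp only [LinearMap.comp_apply, Finsupp.lsingle_apply,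
      Dnj, Fnj, dif_pos (show 1 ≤ i ∧ i ≤ n by omega), dif_pos (show 1 ≤ i+1 ∧ i+1 ≤ n by omega),
      Finsupp.lift_apply, Finsupp.sum_single_index, one_smul,
      zero_smul, Finsupp.mapDomain_finset_sum,
      map_sum, d1, Finsupp.lmapDomain_apply, Finsupp.mapDomain_single]
    have key : ∀ a : Q, ∑ y : Q, (Finsupp.single (fun k : Fin n =>
        if (k : ℕ) < i then op a y else x k) 1 : CR Q n)
        = ∑ z : Q, Finsupp.single (fun k : Fin n => if (k : ℕ) < i then z else x k) 1 :=
      fun a => Fintype.sum_bijective _ (hb a) _ _ (fun y => rfl)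
    trans (∑ z : Q, Finsupp.single (fun k : Fin n => if (k : ℕ) < i then z else x k) (1:ℤ))
    · rw [← key (x ⟨i - 1, by omega⟩)]
      refine Finset.sum_congr rfl fun y _ => ?_
      congr 1
      funext k
      simp only [Fin.coe_castSucc, Fin.val_succ]
      split_ifs <;>
        first
          | rfl
          | omega
          | (exact congrArg x (Fin.ext (by simp; omega)))
          | (exact congrArg (op · y) (congrArg x (Fin.ext (by simp; omega))))
    · rw [← key (x ⟨i, by omega⟩)]
      refine Finset.sum_congr rfl fun y _ => ?_
      congr 1
      funext k
      simp only [Fin.coe_castSucc, Fin.val_succ]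
      split_ifs <;>
        first
          | rfl
          | omega
          | (exact congrArg x (Fin.ext (by simp; omega)))
          | (exact congrArg (op · y) (congrArg x (Fin.ext (by simp; omega))))
  · intro i hi1 hin
    apply Finsupp.lhom_ext' ; intro x
    apply LinearMap.ext_ring
    simp only [LinearMap.comp_apply, Finsupp.lsingle_apply,
      Dnj, Fnj, dif_pos (show 1 ≤ i ∧ i ≤ n by omega),
      Finsupp.lift_apply, Finsupp.sum_single_index, one_smul,
      zero_smul, Finsupp.mapDomain_finset_sum,
      map_sum, d0, Finsupp.lmapDomain_apply, Finsupp.mapDomain_single]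
    refine Finset.sum_congr rfl fun y _ => ?_
    congr 1
    funext k
    simp only [Fin.coe_castSucc, Fin.val_succ]
    split_ifs <;>
      first
        | rfl
        | omega
        | (exact congrArg x (Fin.ext (by simp; omega)))
end

section
/- Let X be a set with binary operations *_0, …, *_k that are pairwise distributive (including each with itself), and let a_0, …, a_k be integers. Then the multi-term boundary satisfies ∂_n^{(a_0,…,a_k)} ∘ ∂_{n+1}^{(a_0,…,a_k)} = 0, i.e. (ℤX^n, ∂^{(a_0,…,a_k)}) is a chain complex. -/
/-- The one-term boundary `∂_{n+1}^{(*)} = Σ_{i=1}^{n+1} (-1)^i d_i^{(*)}`. -/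
noncomputable def bdryOne (X : Type) (op : X → X → X) (n : ℕ) : CR X (n+1) →ₗ[ℤ] CR X n :=
  ∑ i ∈ Finset.Icc 1 (n+1), ((-1 : ℤ)^i) • d1 X op n i

/-- The multi-term boundary `∂_{n+1}^{(a_0,…,a_k)} = Σ_{t=0}^k a_t ∂_{n+1}^{(*_t)}`. -/
noncomputable def bdryMulti (X : Type) {k : ℕ} (ops : Fin (k+1) → X → X → X)
    (a : Fin (k+1) → ℤ) (n : ℕ) : CR X (n+1) →ₗ[ℤ] CR X n :=
  ∑ t, a t • bdryOne X (ops t) n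

/-- The underlying tuple map of the face map `d1`. -/
def fce (Q : Type) (op : Q → Q → Q) (n i : ℕ) : (Fin (n+1) → Q) → Fin n → Q :=
  fun x k =>
    if h : (k : ℕ) + 1 < i ∧ i ≤ n + 1 then
      op (x (Fin.castSucc k)) (x ⟨i - 1, by omega⟩)
    else x k.succ

set_option linter.unnecessarySeqFocus false in
/-- The simplicial-type commutation relation for face maps of a distributive pair,
at the level of tuple maps. -/
lemma fce_comm (Q : Type) (opS opT : Q → Q → Q)
    (hd : ∀ x y z : Q, opS (opT x y) z = opT (opS x z) (opS y z))
    (n i j : ℕ) (hi : 1 ≤ i) (hij : i < j) (hj : j ≤ n + 2) :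
    (fce Q opT n i) ∘ (fce Q opS (n+1) j) = (fce Q opS n (j-1)) ∘ (fce Q opT (n+1) i) := by
  funext x m
  simp only [Function.comp_apply, fce, Fin.coe_castSucc, Fin.val_succ, Fin.succ_mk,
    Fin.castSucc_mk]
  split_ifs
  all_goals try rw [hd]
  all_goals
    first
      | omega
      | ((try apply congrArg x) <;> (try apply Fin.ext) <;> (try simp) <;> omega)
      | (congr 1 <;> (try congr 1) <;> (try apply congrArg x) <;> (try apply Fin.ext) <;>
          (try simp) <;> omega)

lemma d1_fce (Q : Type) (op : Q → Q → Q) (n i : ℕ) :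
    d1 Q op n i = Finsupp.lmapDomain ℤ ℤ (fce Q op n i) := rfl

/-- The commutation relation for the linear face maps. -/
lemma d1_comm (Q : Type) (opS opT : Q → Q → Q)
    (hd : ∀ x y z : Q, opS (opT x y) z = opT (opS x z) (opS y z))
    (n i j : ℕ) (hi : 1 ≤ i) (hij : i < j) (hj : j ≤ n + 2) :
    d1 Q opT n i ∘ₗ d1 Q opS (n+1) j = d1 Q opS n (j-1) ∘ₗ d1 Q opT (n+1) i := by
  rw [d1_fce, d1_fce, d1_fce, d1_fce, ← Finsupp.lmapDomain_comp, ← Finsupp.lmapDomain_comp,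
    fce_comm Q opS opT hd n i j hi hij hj]

lemma sum_comp' {ι M N P : Type*} [AddCommGroup M] [AddCommGroup N] [AddCommGroup P]
    [Module ℤ M] [Module ℤ N] [Module ℤ P]
    (s : Finset ι) (f : ι → N →ₗ[ℤ] P) (g : M →ₗ[ℤ] N) :
    (∑ i ∈ s, f i) ∘ₗ g = ∑ i ∈ s, f i ∘ₗ g := by
  apply LinearMap.ext; intro x
  simp [LinearMap.sum_apply]

lemma comp_sum' {ι M N P : Type*} [AddCommGroup M] [AddCommGroup N] [AddCommGroup P]
    [Module ℤ M] [Module ℤ N] [Module ℤ P]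
    (s : Finset ι) (g : N →ₗ[ℤ] P) (f : ι → M →ₗ[ℤ] N) :
    g ∘ₗ (∑ i ∈ s, f i) = ∑ i ∈ s, g ∘ₗ f i := by
  apply LinearMap.ext; intro x
  simp [LinearMap.sum_apply, map_sum]

/-- **Statement 15.** Let `X` be a set with binary operations `*_0, …, *_k` that are pairwise
distributive (including each with itself), and let `a_0, …, a_k` be integers. Then the
multi-term boundary satisfies `∂ ∘ ∂ = 0`: `(ℤX^n, ∂^{(a_0,…,a_k)})` is a chain complex. -/
theorem multi_term_boundary_squared_zero
    (X : Type) (k : ℕ) (ops : Fin (k+1) → X → X → X) (a : Fin (k+1) → ℤ)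
    (hdist : ∀ s t : Fin (k+1), ∀ x y z : X,
      ops t (ops s x y) z = ops s (ops t x z) (ops t y z))
    (n : ℕ) :
    bdryMulti X ops a n ∘ₗ bdryMulti X ops a (n+1) = 0 := by
  classical
  -- `p = ((s, j), (t, i))` indexes the composite `d1 (ops t) n i ∘ₗ d1 (ops s) (n+1) j`
  set S : Finset ((Fin (k+1) × ℕ) × (Fin (k+1) × ℕ)) :=
    (Finset.univ ×ˢ Finset.Icc 1 (n+2)) ×ˢ (Finset.univ ×ˢ Finset.Icc 1 (n+1)) with hS
  set E : (Fin (k+1) × ℕ) × (Fin (k+1) × ℕ) → (CR X (n+2) →ₗ[ℤ] CR X n) :=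
    fun p => (a p.1.1 * (-1 : ℤ)^p.1.2 * (a p.2.1 * (-1 : ℤ)^p.2.2)) •
      (d1 X (ops p.2.1) n p.2.2 ∘ₗ d1 X (ops p.1.1) (n+1) p.1.2) with hE
  have hexp : bdryMulti X ops a n ∘ₗ bdryMulti X ops a (n+1) = ∑ p ∈ S, E p := by
    simp only [hS, hE, bdryMulti, bdryOne, sum_comp', comp_sum', LinearMap.smul_comp,
      LinearMap.comp_smul, Finset.smul_sum, smul_smul, Finset.sum_product]
  rw [hexp]
  refine Finset.sum_involution
    (fun p _ => if p.2.2 < p.1.2 then ((p.2.1, p.2.2), (p.1.1, p.1.2 - 1))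
      else ((p.2.1, p.2.2 + 1), (p.1.1, p.1.2))) ?_ ?_ ?_ ?_
  · rintro ⟨⟨s, j⟩, ⟨t, i⟩⟩ hp
    simp only [hS, Finset.mem_product, Finset.mem_univ, Finset.mem_Icc, true_and] at hp
    obtain ⟨⟨hj1, hj2⟩, hi1, hi2⟩ := hp
    dsimp only
    by_cases hij : i < j
    · rw [if_pos hij]
      have hD := d1_comm X (ops s) (ops t) (hdist t s) n i j hi1 hij hj2
      simp only [hE]
      rw [hD, ← add_smul]
      have hsgn : a s * (-1 : ℤ)^j * (a t * (-1 : ℤ)^i)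
          + a t * (-1 : ℤ)^i * (a s * (-1 : ℤ)^(j-1)) = 0 := by
        have h1 : (-1 : ℤ)^j = -(-1 : ℤ)^(j-1) := by
          have h2 : j - 1 + 1 = j := by omega
          conv_lhs => rw [← h2]
          rw [pow_succ, mul_neg_one]
        rw [h1]; ring
      rw [hsgn, zero_smul]
    · rw [if_neg hij]
      have hD := d1_comm X (ops t) (ops s) (hdist s t) n j (i+1) hj1 (by omega) (by omega)
      simp only [Nat.add_sub_cancel] at hD
      simp only [hE]
      rw [hD, ← add_smul]
      have hsgn : a s * (-1 : ℤ)^j * (a t * (-1 : ℤ)^i)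
          + a t * (-1 : ℤ)^(i+1) * (a s * (-1 : ℤ)^j) = 0 := by
        rw [pow_succ]; ring
      rw [hsgn, zero_smul]
  · rintro ⟨⟨s, j⟩, ⟨t, i⟩⟩ hp _
    dsimp only
    by_cases hij : i < j
    · rw [if_pos hij]
      simp only [ne_eq, Prod.mk.injEq, not_and]
      intro h1 h2 h3
      omega
    · rw [if_neg hij]
      simp only [ne_eq, Prod.mk.injEq, not_and]
      intro h1 h2 h3
      omega
  · rintro ⟨⟨s, j⟩, ⟨t, i⟩⟩ hp
    simp only [hS, Finset.mem_product, Finset.mem_univ, Finset.mem_Icc, true_and] at hp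
    obtain ⟨⟨hj1, hj2⟩, hi1, hi2⟩ := hp
    dsimp only
    by_cases hij : i < j
    · rw [if_pos hij]
      simp only [hS, Finset.mem_product, Finset.mem_univ, Finset.mem_Icc, true_and]
      exact ⟨⟨by omega, by omega⟩, by omega, by omega⟩
    · rw [if_neg hij]
      simp only [hS, Finset.mem_product, Finset.mem_univ, Finset.mem_Icc, true_and]
      exact ⟨⟨by omega, by omega⟩, by omega, by omega⟩
  · rintro ⟨⟨s, j⟩, ⟨t, i⟩⟩ hp
    simp only [hS, Finset.mem_product, Finset.mem_univ, Finset.mem_Icc, true_and] at hp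
    obtain ⟨⟨hj1, hj2⟩, hi1, hi2⟩ := hp
    dsimp only
    by_cases hij : i < j
    · rw [if_pos hij]
      dsimp only
      rw [if_neg (by omega : ¬ j - 1 < i)]
      have h2 : j - 1 + 1 = j := by omega
      rw [h2]
    · rw [if_neg hij]
      dsimp only
      rw [if_pos (by omega : j < i + 1)]
      simp only [Nat.add_sub_cancel]
end
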